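/- For every citation vector x there exists a rec-incremental constructive sequence from the empty vector to x; i.e., a sequence ⟨⟩ = x₁ ⊑ x₂ ⊑ … ⊑ x_s = x of citation vectors, each obtained from the previous by adding exactly one citation, such that whenever rec(x_i) < rec(x_{i+1}) the vector x_{i+1} is uniform. -/

import Mathlib

/-- A citation vector: a finite nonincreasing list of positive integers. -/
def CitVec (x : List ℕ) : Prop :=
  (∀ a ∈ x, 0 < a) ∧ List.Pairwise (· ≥ ·) x

/-- The rec-index: max over 1 ≤ i ≤ n of i·x_i (0 for the empty vector). -/
def recIdx (x : List ℕ) : ℕ :=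
  ((List.range x.length).map (fun i => (i + 1) * x.getD i 0)).foldr max 0

/-- Domination: u ⊑ x. -/
def Dom (u x : List ℕ) : Prop :=
  u.length ≤ x.length ∧ ∀ i < u.length, u.getD i 0 ≤ x.getD i 0

/-- Uniform: all entries equal. -/
def Uniform (x : List ℕ) : Prop := ∀ a ∈ x, ∀ b ∈ x, a = b

/-- x^[k]: add one citation to publication k (1-indexed; append a 1 if k = n+1). -/
def incr (x : List ℕ) (k : ℕ) : List ℕ :=
  if k ≤ x.length then x.set (k - 1) (x.getD (k - 1) 0 + 1) else x ++ [1]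

/-- k is the smallest index j with x_j = x_k (taking x_{n+1} = 0);
equivalently all earlier entries are strictly larger. -/
def MinIndex (x : List ℕ) (k : ℕ) : Prop :=
  1 ≤ k ∧ k ≤ x.length + 1 ∧ ∀ j, 1 ≤ j → j < k → x.getD (k - 1) 0 < x.getD (j - 1) 0

lemma le_foldr_max {l : List ℕ} {a : ℕ} (h : a ∈ l) : a ≤ l.foldr max 0 := by
  induction l with
  | nil => simp at h
  | cons b t ih =>
    simp only [List.foldr_cons]
    rcases List.mem_cons.mp h with rfl | h
    · exact le_max_left _ _
    · exact le_trans (ih h) (le_max_right _ _)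

lemma foldr_max_le {l : List ℕ} {b : ℕ} (h : ∀ a ∈ l, a ≤ b) : l.foldr max 0 ≤ b := by
  induction l with
  | nil => simp
  | cons c t ih =>
    simp only [List.foldr_cons, max_le_iff]
    exact ⟨h c (List.mem_cons_self), ih fun a ha => h a (List.mem_cons_of_mem _ ha)⟩

lemma le_recIdx (x : List ℕ) {i : ℕ} (h : i < x.length) :
    (i + 1) * x.getD i 0 ≤ recIdx x :=
  le_foldr_max (List.mem_map.mpr ⟨i, List.mem_range.mpr h, rfl⟩)

lemma recIdx_le {x : List ℕ} {b : ℕ} (h : ∀ i < x.length, (i + 1) * x.getD i 0 ≤ b) :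
    recIdx x ≤ b := by
  apply foldr_max_le
  intro a ha
  obtain ⟨i, hi, rfl⟩ := List.mem_map.mp ha
  exact h i (List.mem_range.mp hi)

lemma recIdx_mono {y x : List ℕ} (hl : y.length ≤ x.length)
    (h : ∀ i < y.length, y.getD i 0 ≤ x.getD i 0) : recIdx y ≤ recIdx x := by
  apply recIdx_le
  intro i hi
  exact le_trans (Nat.mul_le_mul_left _ (h i hi)) (le_recIdx x (lt_of_lt_of_le hi hl))

lemma getD_dropLast (x : List ℕ) {i : ℕ} (hi : i < x.length - 1) :
    x.dropLast.getD i 0 = x.getD i 0 := by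
  rw [List.getD_eq_getElem _ _ (show i < x.dropLast.length by simp; omega),
    List.getD_eq_getElem _ _ (show i < x.length by omega), List.getElem_dropLast]

lemma getD_set (x : List ℕ) (d : ℕ) (a : ℕ) (i : ℕ) :
    (x.set d a).getD i 0 = if d = i ∧ i < x.length then a else x.getD i 0 := by
  by_cases hi : i < x.length
  · have hi' : i < (x.set d a).length := by simpa using hi
    rw [List.getD_eq_getElem _ _ hi', List.getElem_set]
    by_cases hdi : d = i
    · rw [if_pos hdi, if_pos ⟨hdi, hi⟩]
    · rw [if_neg hdi, if_neg (by tauto), List.getD_eq_getElem _ _ hi]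
  · rw [List.getD_eq_default _ _ (show (x.set d a).length ≤ i by simpa using not_lt.mp hi),
      List.getD_eq_default _ _ (not_lt.mp hi), if_neg (by tauto)]

lemma set_pred (x : List ℕ) (hpos : ∀ a ∈ x, 0 < a) (hsort : List.Pairwise (· ≥ ·) x)
    (d : ℕ) (hd : d < x.length) (h2 : 2 ≤ x.getD d 0)
    (hnext : d + 1 < x.length → x.getD (d + 1) 0 < x.getD d 0) :
    ∃ y, CitVec y ∧ Dom y x ∧ x.sum = y.sum + 1 ∧ y.length = x.length ∧
      ∀ i, i ≠ d → y.getD i 0 = x.getD i 0 := by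
  have hmono : ∀ i j, i ≤ j → j < x.length → x.getD j 0 ≤ x.getD i 0 := by
    intro i j hij hj
    rcases eq_or_lt_of_le hij with rfl | h
    · exact le_refl _
    · rw [List.getD_eq_getElem _ _ hj, List.getD_eq_getElem _ _ (lt_trans h hj)]
      exact List.pairwise_iff_getElem.mp hsort i j (lt_trans h hj) hj h
  refine ⟨x.set d (x.getD d 0 - 1), ⟨?_, ?_⟩, ⟨by simp, ?_⟩, ?_, by simp, ?_⟩
  · -- positivity
    intro a ha
    obtain ⟨i, hi, rfl⟩ := List.mem_iff_getElem.mp ha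
    rw [List.getElem_set]
    split
    · omega
    · exact hpos _ (List.getElem_mem _)
  · -- sorted
    apply List.pairwise_iff_getElem.mpr
    intro i j hi hj hij
    simp only [List.length_set] at hi hj
    simp only [List.getElem_set]
    have hji : x.getD j 0 ≤ x.getD i 0 := hmono i j (le_of_lt hij) hj
    by_cases hdi : d = i
    · subst hdi
      rw [if_pos rfl, if_neg (show ¬ d = j by omega)]
      have h1 : d + 1 < x.length := by omega
      have h3 : x.getD j 0 ≤ x.getD (d + 1) 0 := hmono (d + 1) j (by omega) hj
      have h4 := hnext h1
      rw [List.getD_eq_getElem _ _ hj] at h3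
      simp only [ge_iff_le]
      omega
    · by_cases hdj : d = j
      · subst hdj
        rw [if_neg hdi, if_pos rfl]
        rw [List.getD_eq_getElem _ _ hi] at hji
        simp only [ge_iff_le]
        omega
      · rw [if_neg hdi, if_neg hdj]
        rw [List.getD_eq_getElem _ _ hi, List.getD_eq_getElem _ _ hj] at hji
        exact hji
  · -- Dom entries
    intro i hi
    rw [getD_set]
    split
    · rename_i h
      rw [← h.1]
      omega
    · exact le_refl _
  · -- sum
    have h1 : x.sum = (x.take d).sum + (x.drop d).sum := (List.sum_take_add_sum_drop x d).symm
    rw [List.sum_set]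
    rw [List.drop_eq_getElem_cons hd, List.sum_cons] at h1
    rw [List.getD_eq_getElem _ _ hd] at h2 ⊢
    simp only [if_pos hd]
    omega
  · -- other entries unchanged
    intro i hne
    rw [getD_set, if_neg (by tauto)]

lemma remove_last (x : List ℕ) (hpos : ∀ a ∈ x, 0 < a) (hsort : List.Pairwise (· ≥ ·) x)
    (hne : x ≠ []) :
    ∃ y, CitVec y ∧ Dom y x ∧ x.sum = y.sum + 1 ∧ x.length - 1 ≤ y.length ∧
      ∀ i < x.length - 1, y.getD i 0 = x.getD i 0 := by
  have hn : 0 < x.length := List.length_pos_iff.mpr hne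
  by_cases hl : x.getD (x.length - 1) 0 = 1
  · -- drop the last entry
    refine ⟨x.dropLast, ⟨?_, ?_⟩, ⟨by simp, ?_⟩, ?_, by simp, ?_⟩
    · intro a ha
      exact hpos a ((List.dropLast_sublist x).mem ha)
    · exact hsort.sublist (List.dropLast_sublist x)
    · intro i hi
      simp only [List.length_dropLast] at hi
      rw [getD_dropLast x hi]
    · have hx : x.dropLast ++ [x.getLast hne] = x := List.dropLast_append_getLast hne
      have hsum : x.sum = x.dropLast.sum + x.getLast hne := by
        conv_lhs => rw [← hx]
        simp
      rw [hsum, List.getLast_eq_getElem hne, ← List.getD_eq_getElem _ 0 (by omega), hl]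
    · intro i hi
      exact getD_dropLast x hi
  · -- decrement the last entry
    have h2 : 2 ≤ x.getD (x.length - 1) 0 := by
      have := hpos (x.getD (x.length - 1) 0) (by
        rw [List.getD_eq_getElem _ _ (by omega)]; exact List.getElem_mem _)
      omega
    obtain ⟨y, hy, hdom, hsum, hlen, heq⟩ := set_pred x hpos hsort (x.length - 1) (by omega) h2
      (by omega)
    exact ⟨y, hy, hdom, hsum, by omega, fun i hi => heq i (by omega)⟩

lemma exists_pred (x : List ℕ) (hx : CitVec x) (hne : x ≠ []) :
    ∃ y, CitVec y ∧ Dom y x ∧ x.sum = y.sum + 1 ∧ (recIdx y < recIdx x → Uniform x) := by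
  obtain ⟨hpos, hsort⟩ := hx
  have hn : 0 < x.length := List.length_pos_iff.mpr hne
  by_cases ha : x.length * x.getD (x.length - 1) 0 ≤ recIdx x.dropLast
  · -- last index is not needed for the max: remove at the end, rec preserved
    obtain ⟨y, hy, hdom, hsum, hlen, heq⟩ := remove_last x hpos hsort hne
    refine ⟨y, hy, hdom, hsum, fun hlt => absurd hlt (not_lt.mpr ?_)⟩
    have hLy : recIdx x.dropLast ≤ recIdx y := by
      apply recIdx_mono (by simp; omega)
      intro i hi
      simp only [List.length_dropLast] at hi
      rw [heq i hi, getD_dropLast x hi]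
    apply recIdx_le
    intro i hi
    rcases Nat.lt_or_ge i (x.length - 1) with h | h
    · calc (i + 1) * x.getD i 0 = (i + 1) * x.dropLast.getD i 0 := by rw [getD_dropLast x h]
        _ ≤ recIdx x.dropLast := le_recIdx _ (by simp; omega)
        _ ≤ recIdx y := hLy
    · have hieq : i = x.length - 1 := by omega
      subst hieq
      have he : x.length - 1 + 1 = x.length := by omega
      rw [he]
      exact le_trans ha hLy
  · push_neg at ha
    by_cases hdesc : ∃ d, d + 1 < x.length ∧ x.getD (d + 1) 0 < x.getD d 0
    · -- a strict descent exists: decrement there, rec preserved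
      obtain ⟨d, hd1, hd2⟩ := hdesc
      have h2 : 2 ≤ x.getD d 0 := by
        have := hpos (x.getD (d + 1) 0) (by
          rw [List.getD_eq_getElem _ _ (by omega)]; exact List.getElem_mem _)
        omega
      obtain ⟨y, hy, hdom, hsum, hlen, heq⟩ := set_pred x hpos hsort d (by omega) h2 (fun _ => hd2)
      refine ⟨y, hy, hdom, hsum, fun hlt => absurd hlt (not_lt.mpr ?_)⟩
      have hlast : y.getD (x.length - 1) 0 = x.getD (x.length - 1) 0 := heq _ (by omega)
      have hkey : x.length * x.getD (x.length - 1) 0 ≤ recIdx y := by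
        have hr := le_recIdx y (i := x.length - 1) (by omega)
        rw [hlast] at hr
        have he : x.length - 1 + 1 = x.length := by omega
        rwa [he] at hr
      apply recIdx_le
      intro i hi
      rcases Nat.lt_or_ge i (x.length - 1) with h | h
      · calc (i + 1) * x.getD i 0 = (i + 1) * x.dropLast.getD i 0 := by rw [getD_dropLast x h]
          _ ≤ recIdx x.dropLast := le_recIdx _ (by simp; omega)
          _ ≤ x.length * x.getD (x.length - 1) 0 := le_of_lt ha
          _ ≤ recIdx y := hkey
      · have hieq : i = x.length - 1 := by omega
        subst hieq
        have he : x.length - 1 + 1 = x.length := by omega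
        rw [he]
        exact hkey
    · -- no descent: x is uniform; remove at the end
      push_neg at hdesc
      have huni : Uniform x := by
        have hconst : ∀ i, i < x.length → x.getD i 0 = x.getD 0 0 := by
          intro i
          induction i with
          | zero => intro _; rfl
          | succ k ih =>
            intro hk
            have h1 : x.getD k 0 ≤ x.getD (k + 1) 0 := hdesc k hk
            have h2 : x.getD (k + 1) 0 ≤ x.getD k 0 := by
              rw [List.getD_eq_getElem _ _ hk, List.getD_eq_getElem _ _ (by omega : k < x.length)]
              exact List.pairwise_iff_getElem.mp hsort k (k + 1) (by omega) hk (by omega)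
            rw [← ih (by omega)]
            omega
        intro a hamem b hbmem
        obtain ⟨i, hi, rfl⟩ := List.mem_iff_getElem.mp hamem
        obtain ⟨j, hj, rfl⟩ := List.mem_iff_getElem.mp hbmem
        rw [← List.getD_eq_getElem _ 0 hi, ← List.getD_eq_getElem _ 0 hj,
          hconst i hi, hconst j hj]
      obtain ⟨y, hy, hdom, hsum, _, _⟩ := remove_last x hpos hsort hne
      exact ⟨y, hy, hdom, hsum, fun _ => huni⟩

lemma citvec_nil : CitVec [] := ⟨by simp, List.Pairwise.nil⟩

lemma main_aux (n : ℕ) : ∀ x : List ℕ, CitVec x → x.sum ≤ n →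
    ∃ (s : ℕ) (c : ℕ → List ℕ),
      c 0 = [] ∧ c s = x ∧ (∀ i ≤ s, CitVec (c i)) ∧
      (∀ i < s, Dom (c i) (c (i + 1)) ∧ (c (i + 1)).sum = (c i).sum + 1) ∧
      (∀ i < s, recIdx (c i) < recIdx (c (i + 1)) → Uniform (c (i + 1))) := by
  induction n with
  | zero =>
    intro x hx hs
    have hxe : x = [] := by
      cases x with
      | nil => rfl
      | cons a t =>
        have := hx.1 a (List.mem_cons_self)
        simp only [List.sum_cons, Nat.le_zero] at hs
        omega
    subst hxe
    exact ⟨0, fun _ => [], rfl, rfl, fun i _ => citvec_nil, fun i hi => by omega,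
      fun i hi => by omega⟩
  | succ n ih =>
    intro x hx hs
    by_cases hne : x = []
    · subst hne
      exact ⟨0, fun _ => [], rfl, rfl, fun i _ => citvec_nil, fun i hi => by omega,
        fun i hi => by omega⟩
    · obtain ⟨y, hy, hdom, hsum, hrec⟩ := exists_pred x hx hne
      obtain ⟨s, c, h0, hsx, hciv, hstep, hrecs⟩ := ih y hy (by omega)
      refine ⟨s + 1, fun i => if i ≤ s then c i else x, by simp [h0], by simp, ?_, ?_, ?_⟩
      · intro i hi
        by_cases h : i ≤ s
        · simpa [h] using hciv i h
        · simpa [h] using hx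
      · intro i hi
        by_cases h : i < s
        · have h1 : i ≤ s := by omega
          have h2 : i + 1 ≤ s := by omega
          simpa [h1, h2] using hstep i h
        · have hieq : i = s := by omega
          subst hieq
          have hns : ¬ (i + 1 ≤ i) := by omega
          simpa [hns, hsx] using ⟨hdom, hsum⟩
      · intro i hi
        by_cases h : i < s
        · have h1 : i ≤ s := by omega
          have h2 : i + 1 ≤ s := by omega
          simpa [h1, h2] using hrecs i h
        · have hieq : i = s := by omega
          subst hieq
          have hns : ¬ (i + 1 ≤ i) := by omega
          simpa [hns, hsx] using hrec

theorem rec_incremental_sequence_exists (x : List ℕ) (hx : CitVec x) :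
    ∃ (s : ℕ) (c : ℕ → List ℕ),
      c 0 = [] ∧ c s = x ∧ (∀ i ≤ s, CitVec (c i)) ∧
      (∀ i < s, Dom (c i) (c (i + 1)) ∧ (c (i + 1)).sum = (c i).sum + 1) ∧
      (∀ i < s, recIdx (c i) < recIdx (c (i + 1)) → Uniform (c (i + 1))) := by
  exact main_aux x.sum x hx (le_refl _)
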